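/- The Rado multigraph is 1-transitive: for any two vertices v_1, v_2 of a countable model of the Rado multigraph axioms, there is an automorphism sending v_1 to v_2. -/

import Mathlib

/-!
Back and forth. Finite partial isomorphisms `{(a₁, b₁), …, (aₙ, bₙ)}` can be extended to any new
vertex `a` on the left: the extension property of the right-hand multigraph provides a fresh `b`
with `ν bᵢ b = μ aᵢ a` for all `i`; by symmetry they also extend on the right. Enumerating both
vertex sets, the Rasiowa–Sikorski lemma (`Order.idealOfCofinals`) gives a directed family of
partial isomorphisms, starting from `{(v₁, v₂)}`, whose union is the graph of an isomorphism.
-/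

open Function

variable {V W : Type*}

structure IsMultigraph (μ : V → V → ℕ) : Prop where
  symm : ∀ x y, μ x y = μ y x
  irrefl : ∀ x, μ x x = 0

structure IsRadoMultigraph (μ : V → V → ℕ) : Prop extends IsMultigraph μ where
  exists_extension : ∀ (n : ℕ) (u : Fin n → V), Injective u →
    ∀ m : Fin n → ℕ, ∃ v : V, (∀ i, v ≠ u i) ∧ ∀ i, μ (u i) v = m i

theorem IsRadoMultigraph.exists_extension_of_finite {μ : V → V → ℕ} {ι : Type*} [Finite ι]
    (hμ : IsRadoMultigraph μ) (u : ι → V) (hu : Injective u) (m : ι → ℕ) :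
    ∃ v : V, (∀ i, v ≠ u i) ∧ ∀ i, μ (u i) v = m i := by
  obtain ⟨n, ⟨e⟩⟩ := Finite.exists_equiv_fin ι
  obtain ⟨v, hne, hv⟩ :=
    hμ.exists_extension n (u ∘ e.symm) (hu.comp e.symm.injective) (m ∘ e.symm)
  exact ⟨v, fun i => by simpa using hne (e i), fun i => by simpa using hv (e i)⟩

namespace Multigraph

variable (μ : V → V → ℕ) (ν : W → W → ℕ)

def IsPartialIso (s : Finset (V × W)) : Prop :=
  ∀ p ∈ s, ∀ q ∈ s, (p.1 = q.1 ↔ p.2 = q.2) ∧ μ p.1 q.1 = ν p.2 q.2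

abbrev PartialIso : Type _ := {s : Finset (V × W) // IsPartialIso μ ν s}

variable {μ ν} [DecidableEq V] [DecidableEq W]

theorem IsPartialIso.image_swap {s : Finset (V × W)} (hs : IsPartialIso μ ν s) :
    IsPartialIso ν μ (s.image Prod.swap) := by
  simp only [IsPartialIso, Finset.mem_image]
  rintro _ ⟨p, hp, rfl⟩ _ ⟨q, hq, rfl⟩
  exact ⟨(hs p hp q hq).1.symm, (hs p hp q hq).2.symm⟩

theorem IsPartialIso.exists_insert_left (hμ : IsMultigraph μ) (hν : IsRadoMultigraph ν)
    {s : Finset (V × W)} (hs : IsPartialIso μ ν s) (a : V) :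
    ∃ b, IsPartialIso μ ν (insert (a, b) s) := by
  by_cases ha : ∃ p ∈ s, p.1 = a
  · obtain ⟨p, hp, rfl⟩ := ha
    exact ⟨p.2, by rwa [Finset.insert_eq_of_mem hp]⟩
  push Not at ha
  have hinj : Injective fun p : s => p.1.2 := fun p q hpq =>
    Subtype.ext (Prod.ext ((hs _ p.2 _ q.2).1.mpr hpq) hpq)
  obtain ⟨b, hb, hμb⟩ := hν.exists_extension_of_finite _ hinj fun p => μ p.1.1 a
  have hnew : ∀ p ∈ s, (p.1 = a ↔ p.2 = b) ∧ μ p.1 a = ν p.2 b := fun p hp =>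
    ⟨iff_of_false (ha p hp) (hb ⟨p, hp⟩).symm, (hμb ⟨p, hp⟩).symm⟩
  refine ⟨b, fun p hp q hq => ?_⟩
  rw [Finset.mem_insert] at hp hq
  rcases hp with rfl | hp <;> rcases hq with rfl | hq
  · simp [hμ.irrefl, hν.irrefl]
  · rw [eq_comm, @eq_comm _ b, hμ.symm, hν.symm]
    exact hnew q hq
  · exact hnew p hp
  · exact hs p hp q hq

theorem IsPartialIso.exists_insert_right (hμ : IsRadoMultigraph μ) (hν : IsMultigraph ν)
    {s : Finset (V × W)} (hs : IsPartialIso μ ν s) (b : W) :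
    ∃ a, IsPartialIso μ ν (insert (a, b) s) := by
  obtain ⟨a, ha⟩ := hs.image_swap.exists_insert_left hν hμ b
  refine ⟨a, ?_⟩
  simpa [Finset.image_insert, Finset.image_image] using ha.image_swap

def PartialIso.definedAtLeft (hμ : IsMultigraph μ) (hν : IsRadoMultigraph ν) (a : V) :
    Order.Cofinal (PartialIso μ ν) where
  carrier := {f | ∃ b, (a, b) ∈ f.1}
  isCofinal f := by
    obtain ⟨b, hb⟩ := f.2.exists_insert_left hμ hν a
    exact ⟨⟨_, hb⟩, ⟨b, Finset.mem_insert_self _ _⟩, Finset.subset_insert _ _⟩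

def PartialIso.definedAtRight (hμ : IsRadoMultigraph μ) (hν : IsMultigraph ν) (b : W) :
    Order.Cofinal (PartialIso μ ν) where
  carrier := {f | ∃ a, (a, b) ∈ f.1}
  isCofinal f := by
    obtain ⟨a, ha⟩ := f.2.exists_insert_right hμ hν b
    exact ⟨⟨_, ha⟩, ⟨a, Finset.mem_insert_self _ _⟩, Finset.subset_insert _ _⟩

end Multigraph

theorem exists_iso_of_forall_compatible {μ : V → V → ℕ} {ν : W → W → ℕ} (R : V → W → Prop)
    (hleft : ∀ a, ∃ b, R a b) (hright : ∀ b, ∃ a, R a b)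
    (hR : ∀ a b a' b', R a b → R a' b' → (a = a' ↔ b = b') ∧ μ a a' = ν b b') :
    ∃ α : V ≃ W, (∀ x y, ν (α x) (α y) = μ x y) ∧ ∀ a b, R a b → α a = b := by
  choose F hF using hleft
  choose G hG using hright
  refine ⟨⟨F, G, fun a => ?_, fun b => ?_⟩, fun x y => (hR _ _ _ _ (hF x) (hF y)).2.symm,
    fun a b h => (hR _ _ _ _ (hF a) h).1.mp rfl⟩
  · exact (hR _ _ _ _ (hG (F a)) (hF a)).1.mpr rfl
  · exact ((hR _ _ _ _ (hG b) (hF (G b))).1.mp rfl).symm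

open Multigraph in
theorem IsRadoMultigraph.exists_iso_extending [Countable V] [Countable W] {μ : V → V → ℕ}
    {ν : W → W → ℕ} (hμ : IsRadoMultigraph μ) (hν : IsRadoMultigraph ν) (f : PartialIso μ ν) :
    ∃ α : V ≃ W, (∀ x y, ν (α x) (α y) = μ x y) ∧ ∀ p ∈ f.1, α p.1 = p.2 := by
  classical
  cases nonempty_encodable V
  cases nonempty_encodable W
  let D : V ⊕ W → Order.Cofinal (PartialIso μ ν) :=
    Sum.elim (PartialIso.definedAtLeft hμ.toIsMultigraph hν)
      (PartialIso.definedAtRight hμ hν.toIsMultigraph)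
  let I := Order.idealOfCofinals f D
  have hleft (a : V) : ∃ b, ∃ g ∈ I, (a, b) ∈ g.1 := by
    obtain ⟨g, ⟨b, hb⟩, hg⟩ := Order.cofinal_meets_idealOfCofinals f D (.inl a)
    exact ⟨b, g, hg, hb⟩
  have hright (b : W) : ∃ a, ∃ g ∈ I, (a, b) ∈ g.1 := by
    obtain ⟨g, ⟨a, ha⟩, hg⟩ := Order.cofinal_meets_idealOfCofinals f D (.inr b)
    exact ⟨a, g, hg, ha⟩
  obtain ⟨α, hα, hαI⟩ := exists_iso_of_forall_compatible (fun a b => ∃ g ∈ I, (a, b) ∈ g.1)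
    hleft hright fun a b a' b' ⟨g, hg, hab⟩ ⟨g', hg', hab'⟩ => by
      obtain ⟨h, -, hgh, hg'h⟩ := I.directed _ hg _ hg'
      exact h.2 _ (hgh hab) _ (hg'h hab')
  exact ⟨α, hα, fun p hp => hαI _ _ ⟨f, Order.mem_idealOfCofinals f D, hp⟩⟩

theorem rado_multigraph_one_transitive_general
    (V : Type) [Countable V]
    (μ : V → V → ℕ) (hsymm : ∀ x y, μ x y = μ y x) (hirr : ∀ x, μ x x = 0)
    (hext : ∀ (n : ℕ) (u : Fin n → V), Function.Injective u →
      ∀ m : Fin n → ℕ, ∃ v : V, (∀ i, v ≠ u i) ∧ ∀ i, μ (u i) v = m i)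
    (v₁ v₂ : V) :
    ∃ α : V ≃ V, (∀ x y, μ (α x) (α y) = μ x y) ∧ α v₁ = v₂ := by
  have hμ : IsRadoMultigraph μ := ⟨⟨hsymm, hirr⟩, hext⟩
  have hf : Multigraph.IsPartialIso μ μ {(v₁, v₂)} := by
    simp [Multigraph.IsPartialIso, hirr]
  obtain ⟨α, hα, hαf⟩ := hμ.exists_iso_extending hμ ⟨_, hf⟩
  exact ⟨α, hα, hαf _ (Finset.mem_singleton_self _)⟩

/-- 1-transitivity of the Rado multigraph: any countable model of the Rado
multigraph axioms (encoded by its symmetric irreflexive multiplicity function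
`μ` with the extension property) has, for any two vertices `v₁ v₂`, an
automorphism sending `v₁` to `v₂`. -/
theorem rado_multigraph_one_transitive
    (V : Type) [Countable V] [Infinite V]
    (μ : V → V → ℕ) (hsymm : ∀ x y, μ x y = μ y x) (hirr : ∀ x, μ x x = 0)
    (hext : ∀ (n : ℕ) (u : Fin n → V), Function.Injective u →
      ∀ m : Fin n → ℕ, ∃ v : V, (∀ i, v ≠ u i) ∧ ∀ i, μ (u i) v = m i)
    (v₁ v₂ : V) :
    ∃ α : V ≃ V, (∀ x y, μ (α x) (α y) = μ x y) ∧ α v₁ = v₂ :=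
  rado_multigraph_one_transitive_general V μ hsymm hirr hext v₁ v₂
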